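/- arXiv:1809.06294 — 2 statements merged into one kernel-verified Lean document; each statement's English description precedes it below -/
import Mathlib

section
/- Let K, L ∈ End*_𝒜(H) with Range(L) ⊆ Range(K) and K of closed range, let {Λᵢ}_{i∈I} be a ∗-K-g-frame for H with bounds A, B ∈ 𝒜 where A is invertible in 𝒜, and let {Γᵢ ∈ End*_𝒜(H,Hᵢ)}_{i∈I} be a family of adjointable operators such that ∑_{i∈I}⟨Γᵢf, Γᵢf⟩ converges in norm for every f ∈ H and whose analysis operator f ↦ (Γᵢf)_{i∈I} into ⊕_{i∈I}Hᵢ has closed range. If there is a constant M > 0 such that ‖∑_{i∈I}⟨(Λᵢ−Γᵢ)f, (Λᵢ−Γᵢ)f⟩‖ ≤ M·min(‖∑_{i∈I}⟨Λᵢf, Λᵢf⟩‖, ‖∑_{i∈I}⟨Γᵢf, Γᵢf⟩‖) for all f ∈ H, then {Γᵢ}_{i∈I} is a ∗-L-g-frame for H: there exist scalars c, d > 0 with c·⟨L*f, L*f⟩ ≤ ∑_{i∈I}⟨Γᵢf, Γᵢf⟩ ≤ d·⟨f, f⟩ for all f ∈ H. -/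
open scoped RightActions

/-!
The perturbation inequality and `⟪x, x⟫ ≤ 2⟪y, y⟫ + 2⟪x - y, x - y⟫` make the norms of
`∑ᵢ ⟪Λᵢ f, Λᵢ f⟫` and `∑ᵢ ⟪Γᵢ f, Γᵢ f⟫` comparable, with constant `2 + 2M`. Together with the
frame bounds of `{Λᵢ}` (inverting `a`) and with `‖L* f‖ ≤ C ‖K* f‖`, which follows from
`Range L ⊆ Range K` and the open mapping theorem for `K` onto its closed range, this bounds
`‖⟪L* f, L* f⟫‖` by a multiple of `‖∑ᵢ ⟪Γᵢ f, Γᵢ f⟫‖`, and the latter by a multiple of `‖⟪f, f⟫‖`.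
All three quantities transform as `p ↦ a p a*` under `f ↦ a • f`, and for positive `p, q` in a
C⋆-algebra, `‖a p a*‖ ≤ C ‖a q a*‖` for every `a` forces `p ≤ C q`; this turns the norm bounds
into the order inequalities in `𝓐`.
-/

/-- Membership in the Hilbert `𝓐`-module direct sum `⊕ᵢ Hᵢ` (modelled inside `Π i, Hᵢ`):
the pointwise inner products `⟪x i, x i⟫` form a norm-convergent series. -/
def MemDS (𝓐 : Type*) {I : Type*} {Hi : I → Type*} [AddCommMonoid 𝓐] [TopologicalSpace 𝓐]
    [∀ i, Inner 𝓐 (Hi i)] (x : ∀ i, Hi i) : Prop :=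
  Summable fun i => (inner 𝓐 (x i) (x i) : 𝓐)

/-- The norm of an element of the direct sum `⊕ᵢ Hᵢ`. -/
noncomputable def dsNorm (𝓐 : Type*) {I : Type*} {Hi : I → Type*} [AddCommMonoid 𝓐]
    [TopologicalSpace 𝓐] [Norm 𝓐] [∀ i, Inner 𝓐 (Hi i)] (x : ∀ i, Hi i) : ℝ :=
  Real.sqrt ‖∑' i, (inner 𝓐 (x i) (x i) : 𝓐)‖

/-- `x` lies in the closure, inside the direct sum `⊕ᵢ Hᵢ`, of the range of the analysis
operator `f ↦ (Λ i f)ᵢ`. -/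
def InClosureRange (𝓐 : Type*) {I H : Type*} {Hi : I → Type*} [AddCommMonoid 𝓐]
    [TopologicalSpace 𝓐] [Norm 𝓐] [∀ i, Inner 𝓐 (Hi i)] [∀ i, AddCommGroup (Hi i)]
    (Λ : ∀ i, H → Hi i) (x : ∀ i, Hi i) : Prop :=
  MemDS 𝓐 x ∧ ∀ ε : ℝ, 0 < ε → ∃ f : H,
    MemDS 𝓐 (fun i => x i - Λ i f) ∧ dsNorm 𝓐 (fun i => x i - Λ i f) < ε

section NormedStarRing

variable {R : Type*} [NormedRing R] [StarRing R] [NormedStarGroup R]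

lemma norm_mul_mul_star_le (b x : R) : ‖b * x * star b‖ ≤ ‖b‖ ^ 2 * ‖x‖ := by
  calc ‖b * x * star b‖ ≤ ‖b‖ * ‖x‖ * ‖star b‖ := norm_mul₃_le
    _ = ‖b‖ ^ 2 * ‖x‖ := by rw [norm_star]; ring

lemma norm_le_norm_inv_sq_mul_norm_conj (u : Rˣ) (x : R) :
    ‖x‖ ≤ ‖(↑u⁻¹ : R)‖ ^ 2 * ‖u * x * star (u : R)‖ := by
  calc ‖x‖ = ‖(↑u⁻¹ : R) * (u * x * star (u : R)) * star (↑u⁻¹ : R)‖ := by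
        simp only [mul_assoc, ← star_mul, Units.inv_mul, star_one, mul_one,
          Units.inv_mul_cancel_left]
    _ ≤ _ := norm_mul_mul_star_le _ _

end NormedStarRing

section CStarAlgebra

open CFC Ring

variable {𝓐 : Type*} [CStarAlgebra 𝓐] [PartialOrder 𝓐] [StarOrderedRing 𝓐]

lemma norm_le_sq_norm_mul_of_le_mul_mul_star {s b x : 𝓐} (hs : 0 ≤ s)
    (h : s ≤ b * x * star b) : ‖s‖ ≤ ‖b‖ ^ 2 * ‖x‖ :=
  (CStarAlgebra.norm_le_norm_of_nonneg_of_le hs h).trans (norm_mul_mul_star_le b x)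

lemma norm_le_norm_inv_sq_mul_of_conj_le {u : 𝓐ˣ} {x s : 𝓐} (hx : 0 ≤ x)
    (h : u * x * star (u : 𝓐) ≤ s) : ‖x‖ ≤ ‖(↑u⁻¹ : 𝓐)‖ ^ 2 * ‖s‖ :=
  (norm_le_norm_inv_sq_mul_norm_conj u x).trans <| by
    gcongr; exact CStarAlgebra.norm_le_norm_of_nonneg_of_le (star_right_conjugate_nonneg hx _) h

lemma norm_le_of_le_two_smul_add {s p d : 𝓐} (hs : 0 ≤ s)
    (h : s ≤ (2 : ℝ) • p + (2 : ℝ) • d) {M : ℝ} (hd : ‖d‖ ≤ M * ‖p‖) :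
    ‖s‖ ≤ (2 + 2 * M) * ‖p‖ := by
  calc ‖s‖ ≤ ‖(2 : ℝ) • p + (2 : ℝ) • d‖ := CStarAlgebra.norm_le_norm_of_nonneg_of_le hs h
    _ ≤ 2 * ‖p‖ + 2 * ‖d‖ := (norm_add_le _ _).trans_eq (by simp [norm_smul])
    _ ≤ (2 + 2 * M) * ‖p‖ := by linarith

/- With `c = q + ε`, conjugating by `√(c⁻¹)` makes `q` a contraction, so the hypothesis bounds
the conjugate of `p` by `C`; conjugating back by `√c` gives `p ≤ C • c`. -/
lemma le_smul_add_algebraMap_of_norm_conj_le {p q : 𝓐} (hp : 0 ≤ p) (hq : 0 ≤ q) {C : ℝ}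
    (hC : 0 ≤ C) (h : ∀ a : 𝓐, ‖a * p * star a‖ ≤ C * ‖a * q * star a‖) {ε : ℝ}
    (hε : 0 < ε) : p ≤ C • (q + algebraMap ℝ 𝓐 ε) := by
  nontriviality 𝓐
  set c := q + algebraMap ℝ 𝓐 ε
  have hc : IsStrictlyPositive c := (isStrictlyPositive_algebraMap hε).nonneg_add hq
  have hq_conj : ‖conjSqrt c⁻¹ʳ q‖ ≤ 1 := by
    have hle : conjSqrt c⁻¹ʳ q ≤ conjSqrt c⁻¹ʳ c :=
      conjSqrt_le_conjSqrt (le_add_of_nonneg_right (isStrictlyPositive_algebraMap hε).nonneg)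
    have := CStarAlgebra.norm_le_norm_of_nonneg_of_le
      (by simpa using conjSqrt_le_conjSqrt (c := c⁻¹ʳ) hq) hle
    rwa [conjSqrt_ringInverse_self c, norm_one] at this
  have hp_conj : conjSqrt c⁻¹ʳ p ≤ algebraMap ℝ 𝓐 C := by
    have hnorm : ‖conjSqrt c⁻¹ʳ p‖ ≤ C := by
      have := h (sqrt c⁻¹ʳ)
      rw [(show IsSelfAdjoint (sqrt c⁻¹ʳ) by cfc_tac).star_eq, ← conjSqrt_apply,
        ← conjSqrt_apply] at this
      exact this.trans (mul_le_of_le_one_right hC hq_conj)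
    have hsa : IsSelfAdjoint (conjSqrt c⁻¹ʳ p) :=
      .of_nonneg (by simpa using conjSqrt_le_conjSqrt (c := c⁻¹ʳ) hp)
    exact hsa.le_algebraMap_norm_self.trans (algebraMap_le_algebraMap.2 hnorm)
  calc p = conjSqrt c (conjSqrt c⁻¹ʳ p) := (conjSqrt_conjSqrt_ringInverse c p).symm
    _ ≤ conjSqrt c (algebraMap ℝ 𝓐 C) := conjSqrt_le_conjSqrt hp_conj
    _ = C • c := by rw [Algebra.algebraMap_eq_smul_one, map_smul, conjSqrt_one c hc.nonneg]

lemma le_smul_of_norm_conj_le {p q : 𝓐} (hp : 0 ≤ p) (hq : 0 ≤ q) {C : ℝ} (hC : 0 ≤ C)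
    (h : ∀ a : 𝓐, ‖a * p * star a‖ ≤ C * ‖a * q * star a‖) : p ≤ C • q := by
  have hlim : Filter.Tendsto (fun ε : ℝ => C • (q + algebraMap ℝ 𝓐 ε))
      (nhdsWithin 0 (Set.Ioi 0)) (nhds (C • q)) := by
    have hcont : Continuous fun ε : ℝ => C • (q + algebraMap ℝ 𝓐 ε) := by fun_prop
    simpa using (hcont.tendsto 0).mono_left nhdsWithin_le_nhds
  exact ge_of_tendsto hlim (eventually_nhdsWithin_of_forall fun _ hε =>
    le_smul_add_algebraMap_of_norm_conj_le hp hq hC h hε)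

lemma exists_pos_le_smul_of_norm_le {X : Type*} [SMul 𝓐 X] {P Q : X → 𝓐}
    (hP₀ : ∀ x, 0 ≤ P x) (hQ₀ : ∀ x, 0 ≤ Q x)
    (hP : ∀ (a : 𝓐) x, P (a • x) = a * P x * star a)
    (hQ : ∀ (a : 𝓐) x, Q (a • x) = a * Q x * star a)
    {C : ℝ} (h : ∀ x, ‖P x‖ ≤ C * ‖Q x‖) : ∃ d : ℝ, 0 < d ∧ ∀ x, P x ≤ d • Q x := by
  refine ⟨|C| + 1, by positivity, fun x => le_smul_of_norm_conj_le (hP₀ x) (hQ₀ x)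
    (by positivity) fun a => ?_⟩
  rw [← hP, ← hQ]
  exact (h _).trans (by gcongr; linarith [le_abs_self C])

lemma exists_pos_smul_le_of_norm_le {X : Type*} [SMul 𝓐 X] {P Q : X → 𝓐}
    (hP₀ : ∀ x, 0 ≤ P x) (hQ₀ : ∀ x, 0 ≤ Q x)
    (hP : ∀ (a : 𝓐) x, P (a • x) = a * P x * star a)
    (hQ : ∀ (a : 𝓐) x, Q (a • x) = a * Q x * star a)
    {C : ℝ} (h : ∀ x, ‖P x‖ ≤ C * ‖Q x‖) : ∃ c : ℝ, 0 < c ∧ ∀ x, c • P x ≤ Q x := by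
  obtain ⟨d, hd, hle⟩ := exists_pos_le_smul_of_norm_le hP₀ hQ₀ hP hQ h
  refine ⟨d⁻¹, inv_pos.2 hd, fun x => ?_⟩
  calc d⁻¹ • P x ≤ d⁻¹ • d • Q x := smul_le_smul_of_nonneg_left (hle x) (inv_nonneg.2 hd.le)
    _ = Q x := inv_smul_smul₀ hd.ne' _

end CStarAlgebra

lemma ContinuousLinearMap.exists_preimage_norm_le_of_isClosed_range {𝕜 E F : Type*}
    [NontriviallyNormedField 𝕜] [NormedAddCommGroup E] [NormedSpace 𝕜 E] [CompleteSpace E]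
    [NormedAddCommGroup F] [NormedSpace 𝕜 F] [CompleteSpace F] (K : E →L[𝕜] F)
    (hK : IsClosed (Set.range K)) :
    ∃ C > 0, ∀ y ∈ Set.range K, ∃ x, K x = y ∧ ‖x‖ ≤ C * ‖y‖ := by
  let V := LinearMap.range (K : E →ₗ[𝕜] F)
  have : CompleteSpace V := hK.completeSpace_coe
  let K₀ : E →L[𝕜] V := K.codRestrict V (LinearMap.mem_range_self (K : E →ₗ[𝕜] F))
  obtain ⟨C, hC, hpre⟩ := K₀.exists_preimage_norm_le fun ⟨_, x, hx⟩ => ⟨x, Subtype.ext hx⟩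
  refine ⟨C, hC, fun y hy => ?_⟩
  obtain ⟨x, hx, hxle⟩ := hpre ⟨y, hy⟩
  exact ⟨x, congrArg Subtype.val hx, hxle⟩

namespace CStarModule

section Adjoint

variable {𝓐 : Type*} [CStarAlgebra 𝓐] [PartialOrder 𝓐]
variable {E F G : Type*} [NormedAddCommGroup E] [NormedSpace ℂ E] [SMul 𝓐 E] [CStarModule 𝓐 E]
  [NormedAddCommGroup F] [NormedSpace ℂ F] [SMul 𝓐 F] [CStarModule 𝓐 F]
  [NormedAddCommGroup G] [NormedSpace ℂ G] [SMul 𝓐 G] [CStarModule 𝓐 G]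

variable (𝓐) in
def IsAdjointPair (T : E → F) (S : F → E) : Prop :=
  ∀ x y, (inner 𝓐 (T x) y : 𝓐) = inner 𝓐 x (S y)

lemma IsAdjointPair.symm {T : E → F} {S : F → E} (h : IsAdjointPair 𝓐 T S) :
    IsAdjointPair 𝓐 S T := fun y x => by
  rw [← star_inner, ← h, star_inner]

lemma IsAdjointPair.map_smul {T : E → F} {S : F → E} (h : IsAdjointPair 𝓐 T S) (a : 𝓐)
    (x : E) : T (a • x) = a • T x := by
  rw [← sub_eq_zero, ← inner_self (A := 𝓐)]
  simp [inner_sub_left, h _]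

lemma inner_smul_self (a : 𝓐) (x : E) :
    (inner 𝓐 (a • x) (a • x) : 𝓐) = a * inner 𝓐 x x * star a := by
  simp [mul_assoc]

lemma inner_self_le_two_smul_add [StarOrderedRing 𝓐] (x y : E) :
    (inner 𝓐 x x : 𝓐) ≤ (2 : ℝ) • inner 𝓐 y y + (2 : ℝ) • inner 𝓐 (x - y) (x - y) := by
  rw [← sub_nonneg]
  convert inner_self_nonneg (A := 𝓐) (x := (2 : ℝ) • y - x) using 1
  simp [inner_sub_left, inner_sub_right]
  module

lemma exists_norm_adjoint_le_of_range_subset [StarOrderedRing 𝓐] [CompleteSpace E]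
    [CompleteSpace F] {K : E →L[ℂ] F} {K' : F → E} {L : G →L[ℂ] F} {L' : F → G}
    (hK : IsAdjointPair 𝓐 K K') (hL : IsAdjointPair 𝓐 L L')
    (hrange : Set.range L ⊆ Set.range K) (hKclosed : IsClosed (Set.range K)) :
    ∃ C, ∀ y, ‖L' y‖ ≤ C * ‖K' y‖ := by
  obtain ⟨C, hC, hpre⟩ := K.exists_preimage_norm_le_of_isClosed_range hKclosed
  refine ⟨C * ‖L‖, fun y => ?_⟩
  obtain ⟨x, hx, hxle⟩ := hpre _ (hrange ⟨L' y, rfl⟩)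
  have : ‖L' y‖ ^ 2 ≤ C * ‖L‖ * ‖K' y‖ * ‖L' y‖ :=
    calc ‖L' y‖ ^ 2 = ‖(inner 𝓐 x (K' y) : 𝓐)‖ := by
          rw [norm_sq_eq (A := 𝓐), ← hK, hx, hL]
      _ ≤ ‖x‖ * ‖K' y‖ := norm_inner_le E
      _ ≤ C * (‖L‖ * ‖L' y‖) * ‖K' y‖ := by
          gcongr; exact hxle.trans (by gcongr; exact L.le_opNorm _)
      _ = C * ‖L‖ * ‖K' y‖ * ‖L' y‖ := by ring
  nlinarith [norm_nonneg (L' y), mul_nonneg (mul_nonneg hC.le (norm_nonneg L)) (norm_nonneg (K' y))]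

end Adjoint

section Families

variable {𝓐 : Type*} [CStarAlgebra 𝓐] [PartialOrder 𝓐]
variable {ι : Type*} {E : ι → Type*} [∀ i, NormedAddCommGroup (E i)] [∀ i, NormedSpace ℂ (E i)]
  [∀ i, SMul 𝓐 (E i)] [∀ i, CStarModule 𝓐 (E i)]

lemma tsum_inner_smul_self {x : ∀ i, E i} (hx : Summable fun i => (inner 𝓐 (x i) (x i) : 𝓐))
    (a : 𝓐) :
    ∑' i, (inner 𝓐 (a • x i) (a • x i) : 𝓐) = a * (∑' i, inner 𝓐 (x i) (x i)) * star a := by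
  simp_rw [inner_smul_self]
  rw [(hx.mul_left a).tsum_mul_right, hx.tsum_mul_left]

lemma tsum_inner_map_smul_self {F : Type*} [NormedAddCommGroup F] [NormedSpace ℂ F] [SMul 𝓐 F]
    [CStarModule 𝓐 F] {T : ∀ i, F → E i} {S : ∀ i, E i → F} (hT : ∀ i, IsAdjointPair 𝓐 (T i) (S i))
    {f : F} (hf : Summable fun i => (inner 𝓐 (T i f) (T i f) : 𝓐)) (a : 𝓐) :
    ∑' i, (inner 𝓐 (T i (a • f)) (T i (a • f)) : 𝓐) =
      a * (∑' i, inner 𝓐 (T i f) (T i f)) * star a := by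
  simp only [fun i => (hT i).map_smul a f]
  exact tsum_inner_smul_self hf a

variable [StarOrderedRing 𝓐]

lemma tsum_inner_self_le_two_smul_add {x y : ∀ i, E i}
    (hx : Summable fun i => (inner 𝓐 (x i) (x i) : 𝓐))
    (hy : Summable fun i => (inner 𝓐 (y i) (y i) : 𝓐))
    (hxy : Summable fun i => (inner 𝓐 (x i - y i) (x i - y i) : 𝓐)) :
    ∑' i, (inner 𝓐 (x i) (x i) : 𝓐) ≤
      (2 : ℝ) • ∑' i, (inner 𝓐 (y i) (y i) : 𝓐) +
        (2 : ℝ) • ∑' i, (inner 𝓐 (x i - y i) (x i - y i) : 𝓐) := by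
  rw [← hy.tsum_const_smul, ← hxy.tsum_const_smul,
    ← (hy.const_smul _).tsum_add (hxy.const_smul _)]
  exact hx.tsum_le_tsum (fun i => inner_self_le_two_smul_add (x i) (y i))
    ((hy.const_smul _).add (hxy.const_smul _))

lemma norm_tsum_inner_self_le_of_perturbation {x y : ∀ i, E i}
    (hx : Summable fun i => (inner 𝓐 (x i) (x i) : 𝓐))
    (hy : Summable fun i => (inner 𝓐 (y i) (y i) : 𝓐))
    (hxy : Summable fun i => (inner 𝓐 (x i - y i) (x i - y i) : 𝓐)) {M : ℝ} (hM : 0 ≤ M)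
    (h : ‖∑' i, (inner 𝓐 (x i - y i) (x i - y i) : 𝓐)‖ ≤
      M * min ‖∑' i, (inner 𝓐 (x i) (x i) : 𝓐)‖ ‖∑' i, (inner 𝓐 (y i) (y i) : 𝓐)‖) :
    ‖∑' i, (inner 𝓐 (y i) (y i) : 𝓐)‖ ≤ (2 + 2 * M) * ‖∑' i, (inner 𝓐 (x i) (x i) : 𝓐)‖ ∧
      ‖∑' i, (inner 𝓐 (x i) (x i) : 𝓐)‖ ≤ (2 + 2 * M) * ‖∑' i, (inner 𝓐 (y i) (y i) : 𝓐)‖ := by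
  have hswap : ∀ i, (inner 𝓐 (y i - x i) (y i - x i) : 𝓐) = inner 𝓐 (x i - y i) (x i - y i) :=
    fun i => by rw [← neg_sub, inner_neg_left, inner_neg_right, neg_neg]
  have hyx := tsum_inner_self_le_two_smul_add hy hx (by simpa only [hswap] using hxy)
  simp only [hswap] at hyx
  exact ⟨norm_le_of_le_two_smul_add (tsum_nonneg fun _ => inner_self_nonneg) hyx
      (h.trans (by gcongr; exact min_le_left _ _)),
    norm_le_of_le_two_smul_add (tsum_nonneg fun _ => inner_self_nonneg)
      (tsum_inner_self_le_two_smul_add hx hy hxy) (h.trans (by gcongr; exact min_le_right _ _))⟩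

end Families

end CStarModule

theorem star_L_g_frame_of_perturbation_general
    {𝓐 : Type*} [CStarAlgebra 𝓐] [PartialOrder 𝓐] [StarOrderedRing 𝓐]
    {I : Type*}
    {H : Type*} [NormedAddCommGroup H] [NormedSpace ℂ H] [SMul 𝓐 H]
    [CStarModule 𝓐 H] [CompleteSpace H]
    {Hi : I → Type*} [∀ i, NormedAddCommGroup (Hi i)] [∀ i, NormedSpace ℂ (Hi i)]
    [∀ i, SMul 𝓐 (Hi i)] [∀ i, CStarModule 𝓐 (Hi i)]
    -- `K` and `L` are adjointable operators on `H` with adjoints `Kadj`, `Ladj`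
    (K Kadj L Ladj : H →L[ℂ] H)
    (hK : ∀ x y : H, (inner 𝓐 (K x) y : 𝓐) = inner 𝓐 x (Kadj y))
    (hL : ∀ x y : H, (inner 𝓐 (L x) y : 𝓐) = inner 𝓐 x (Ladj y))
    -- `Range(L) ⊆ Range(K)` and `K` has closed range
    (hrange : Set.range L ⊆ Set.range K)
    (hKclosed : IsClosed (Set.range K))
    (Λ : ∀ i, H →L[ℂ] Hi i)
    -- `{Λ i}` is a `∗`-`K`-`g`-frame with bounds `a`, `b`, where `a` is invertible
    (a b : 𝓐) (haU : IsUnit a)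
    (hsum : ∀ x : H, Summable fun i => (inner 𝓐 (Λ i x) (Λ i x) : 𝓐))
    (hlow : ∀ x : H,
      a * (inner 𝓐 (Kadj x) (Kadj x) : 𝓐) * star a ≤ ∑' i, (inner 𝓐 (Λ i x) (Λ i x) : 𝓐))
    (hup : ∀ x : H, ∑' i, (inner 𝓐 (Λ i x) (Λ i x) : 𝓐) ≤ b * (inner 𝓐 x x : 𝓐) * star b)
    -- the family `Γ i ∈ End*(H, Hi i)` of adjointable operators with convergent sums
    (Γ : ∀ i, H →L[ℂ] Hi i) (Γadj : ∀ i, Hi i →L[ℂ] H)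
    (hΓ : ∀ i (x : H) (y : Hi i), (inner 𝓐 (Γ i x) y : 𝓐) = inner 𝓐 x (Γadj i y))
    (hsumΓ : ∀ x : H, Summable fun i => (inner 𝓐 (Γ i x) (Γ i x) : 𝓐))
    (hsumdiff : ∀ x : H, Summable fun i => (inner 𝓐 (Λ i x - Γ i x) (Λ i x - Γ i x) : 𝓐))
    -- the perturbation condition
    (M : ℝ) (hM : 0 < M)
    (hpert : ∀ f : H, ‖∑' i, (inner 𝓐 (Λ i f - Γ i f) (Λ i f - Γ i f) : 𝓐)‖ ≤
      M * min ‖∑' i, (inner 𝓐 (Λ i f) (Λ i f) : 𝓐)‖ ‖∑' i, (inner 𝓐 (Γ i f) (Γ i f) : 𝓐)‖) :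
    ∃ c d : ℝ, 0 < c ∧ 0 < d ∧ ∀ f : H,
      c • (inner 𝓐 (Ladj f) (Ladj f) : 𝓐) ≤ ∑' i, (inner 𝓐 (Γ i f) (Γ i f) : 𝓐) ∧
      ∑' i, (inner 𝓐 (Γ i f) (Γ i f) : 𝓐) ≤ d • (inner 𝓐 f f : 𝓐) := by
  obtain ⟨u, rfl⟩ := haU
  set SΛ : H → 𝓐 := fun f => ∑' i, inner 𝓐 (Λ i f) (Λ i f)
  set SΓ : H → 𝓐 := fun f => ∑' i, inner 𝓐 (Γ i f) (Γ i f)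
  have hSΓ₀ (f : H) : 0 ≤ SΓ f := tsum_nonneg fun _ => CStarModule.inner_self_nonneg
  have hSΓ_smul (c : 𝓐) (f : H) : SΓ (c • f) = c * SΓ f * star c :=
    CStarModule.tsum_inner_map_smul_self hΓ (hsumΓ f) c
  have hcomp (f : H) := CStarModule.norm_tsum_inner_self_le_of_perturbation (hsum f) (hsumΓ f)
    (hsumdiff f) hM.le (hpert f)
  obtain ⟨d, hd, hupper⟩ := exists_pos_le_smul_of_norm_le hSΓ₀
    (fun _ => CStarModule.inner_self_nonneg) hSΓ_smul CStarModule.inner_smul_self fun f => calc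
      ‖SΓ f‖ ≤ (2 + 2 * M) * ‖SΛ f‖ := (hcomp f).1
      _ ≤ (2 + 2 * M) * (‖b‖ ^ 2 * ‖(inner 𝓐 f f : 𝓐)‖) := by
        gcongr; exact norm_le_sq_norm_mul_of_le_mul_mul_star
          (tsum_nonneg fun _ => CStarModule.inner_self_nonneg) (hup f)
      _ = (2 + 2 * M) * ‖b‖ ^ 2 * ‖(inner 𝓐 f f : 𝓐)‖ := by ring
  obtain ⟨C, hC⟩ := CStarModule.exists_norm_adjoint_le_of_range_subset hK hL hrange hKclosed
  obtain ⟨c, hc, hlower⟩ := exists_pos_smul_le_of_norm_le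
    (fun _ => CStarModule.inner_self_nonneg) hSΓ₀
    (fun c f => by rw [(CStarModule.IsAdjointPair.symm hL).map_smul, CStarModule.inner_smul_self])
    hSΓ_smul fun f => calc
      ‖(inner 𝓐 (Ladj f) (Ladj f) : 𝓐)‖ = ‖Ladj f‖ ^ 2 := (CStarModule.norm_sq_eq (A := 𝓐)).symm
      _ ≤ C ^ 2 * ‖Kadj f‖ ^ 2 := by rw [← mul_pow]; gcongr; exact hC f
      _ ≤ C ^ 2 * (‖(↑u⁻¹ : 𝓐)‖ ^ 2 * ‖SΛ f‖) := by
        rw [CStarModule.norm_sq_eq (A := 𝓐)]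
        gcongr; exact norm_le_norm_inv_sq_mul_of_conj_le CStarModule.inner_self_nonneg (hlow f)
      _ ≤ C ^ 2 * (‖(↑u⁻¹ : 𝓐)‖ ^ 2 * ((2 + 2 * M) * ‖SΓ f‖)) := by gcongr; exact (hcomp f).2
      _ = C ^ 2 * ‖(↑u⁻¹ : 𝓐)‖ ^ 2 * (2 + 2 * M) * ‖SΓ f‖ := by ring
  exact ⟨c, d, hc, hd, fun f => ⟨hlower f, hupper f⟩⟩

/-- Perturbation: let `Range(L) ⊆ Range(K)` with `K` of closed range, let
`{Λ i}` be a `∗`-`K`-`g`-frame with bounds `a, b` (`a` invertible), and let `{Γ i}` be a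
family with convergent sums whose analysis operator has closed range, satisfying the
perturbation condition with constant `M > 0`. Then `{Γ i}` is a `∗`-`L`-`g`-frame: there are
scalars `c, d > 0` with `c•⟪L*f,L*f⟫ ≤ ∑ᵢ ⟪Γᵢf,Γᵢf⟫ ≤ d•⟪f,f⟫` for all `f`. -/
theorem star_L_g_frame_of_perturbation
    {𝓐 : Type*} [CStarAlgebra 𝓐] [PartialOrder 𝓐] [StarOrderedRing 𝓐]
    {I : Type*} [Countable I]
    {H : Type*} [NormedAddCommGroup H] [NormedSpace ℂ H] [SMul 𝓐 H]
    [CStarModule 𝓐 H] [CompleteSpace H]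
    {Hi : I → Type*} [∀ i, NormedAddCommGroup (Hi i)] [∀ i, NormedSpace ℂ (Hi i)]
    [∀ i, SMul 𝓐 (Hi i)] [∀ i, CStarModule 𝓐 (Hi i)] [∀ i, CompleteSpace (Hi i)]
    -- `K` and `L` are adjointable operators on `H` with adjoints `Kadj`, `Ladj`
    (K Kadj L Ladj : H →L[ℂ] H)
    (hK : ∀ x y : H, (inner 𝓐 (K x) y : 𝓐) = inner 𝓐 x (Kadj y))
    (hL : ∀ x y : H, (inner 𝓐 (L x) y : 𝓐) = inner 𝓐 x (Ladj y))
    -- `Range(L) ⊆ Range(K)` and `K` has closed range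
    (hrange : Set.range L ⊆ Set.range K)
    (hKclosed : IsClosed (Set.range K))
    -- the family `Λ i ∈ End*(H, Hi i)` of adjointable operators
    (Λ : ∀ i, H →L[ℂ] Hi i) (Λadj : ∀ i, Hi i →L[ℂ] H)
    (hΛ : ∀ i (x : H) (y : Hi i), (inner 𝓐 (Λ i x) y : 𝓐) = inner 𝓐 x (Λadj i y))
    -- `{Λ i}` is a `∗`-`K`-`g`-frame with bounds `a`, `b`, where `a` is invertible
    (a b : 𝓐) (ha : a ≠ 0) (hb : b ≠ 0) (haU : IsUnit a)
    (hsum : ∀ x : H, Summable fun i => (inner 𝓐 (Λ i x) (Λ i x) : 𝓐))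
    (hlow : ∀ x : H,
      a * (inner 𝓐 (Kadj x) (Kadj x) : 𝓐) * star a ≤ ∑' i, (inner 𝓐 (Λ i x) (Λ i x) : 𝓐))
    (hup : ∀ x : H, ∑' i, (inner 𝓐 (Λ i x) (Λ i x) : 𝓐) ≤ b * (inner 𝓐 x x : 𝓐) * star b)
    -- the family `Γ i ∈ End*(H, Hi i)` of adjointable operators with convergent sums
    (Γ : ∀ i, H →L[ℂ] Hi i) (Γadj : ∀ i, Hi i →L[ℂ] H)
    (hΓ : ∀ i (x : H) (y : Hi i), (inner 𝓐 (Γ i x) y : 𝓐) = inner 𝓐 x (Γadj i y))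
    (hsumΓ : ∀ x : H, Summable fun i => (inner 𝓐 (Γ i x) (Γ i x) : 𝓐))
    (hsumdiff : ∀ x : H, Summable fun i => (inner 𝓐 (Λ i x - Γ i x) (Λ i x - Γ i x) : 𝓐))
    -- the analysis operator of `{Γ i}` has closed range in `⊕ᵢ Hᵢ`
    (hΓclosed : ∀ x : ∀ i, Hi i, InClosureRange 𝓐 (fun i => ⇑(Γ i)) x →
      ∃ f : H, x = fun i => Γ i f)
    -- the perturbation condition
    (M : ℝ) (hM : 0 < M)
    (hpert : ∀ f : H, ‖∑' i, (inner 𝓐 (Λ i f - Γ i f) (Λ i f - Γ i f) : 𝓐)‖ ≤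
      M * min ‖∑' i, (inner 𝓐 (Λ i f) (Λ i f) : 𝓐)‖ ‖∑' i, (inner 𝓐 (Γ i f) (Γ i f) : 𝓐)‖) :
    ∃ c d : ℝ, 0 < c ∧ 0 < d ∧ ∀ f : H,
      c • (inner 𝓐 (Ladj f) (Ladj f) : 𝓐) ≤ ∑' i, (inner 𝓐 (Γ i f) (Γ i f) : 𝓐) ∧
      ∑' i, (inner 𝓐 (Γ i f) (Γ i f) : 𝓐) ≤ d • (inner 𝓐 f f : 𝓐) :=
  star_L_g_frame_of_perturbation_general K Kadj L Ladj hK hL hrange hKclosed Λ a b haU hsum hlow hup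
    Γ Γadj hΓ hsumΓ hsumdiff M hM hpert
end

section
/- Let K ∈ End*_𝒜(H) and let {Λᵢ}_{i∈I} be a ∗-K-g-frame for H whose frame operator S, given by Sf = ∑_{i∈I} Λᵢ*Λᵢ f, is invertible in End*_𝒜(H). Then the family {Λᵢ ∘ S⁻¹K}_{i∈I} is a dual ∗-K-g-frame for {Λᵢ}_{i∈I}; in particular, Kf = ∑_{i∈I} Λᵢ*(Λᵢ S⁻¹ K f) for every f ∈ H. -/
open scoped RightActions

/-- The `CStarModule` class as in the older Mathlib (right `𝓐`-action via `𝓐ᵐᵒᵖ`, inner product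
`𝓐`-linear on the right); current Mathlib's `CStarModule` uses a left action instead. -/
class CStarModuleRight (A E : Type*) [NonUnitalSemiring A] [StarRing A]
    [Module ℂ A] [AddCommGroup E] [Module ℂ E] [PartialOrder A] [SMul Aᵐᵒᵖ E] [Norm A] [Norm E]
    extends Inner A E where
  inner_add_right {x} {y} {z} : inner x (y + z) = inner x y + inner x z
  inner_self_nonneg {x} : 0 ≤ inner x x
  inner_self {x} : inner x x = 0 ↔ x = 0
  inner_op_smul_right {a : A} {x y : E} : inner x (y <• a) = inner x y * a
  inner_smul_right_complex {z : ℂ} {x} {y} : inner x (z • y) = z • inner x y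
  star_inner x y : star (inner x y) = inner y x
  norm_eq_sqrt_norm_inner_self x : ‖x‖ = √‖inner x x‖

/-!
The dual relation is the defining series of the frame operator evaluated at `S⁻¹ K f`. For the
Bessel bound, `S` is self-adjoint (its inner products are `∑ᵢ ⟪Λᵢ u, Λᵢ v⟫`), hence so is `S⁻¹`,
and `T = S⁻¹ K` is adjointable, in particular `𝓐`-linear. Lance's inequality
`⟪T x, T x⟫ ≤ ‖T‖² ⟪x, x⟫` then turns the upper frame bound at `T f` into a bound in terms of
`⟪f, f⟫`. Lance's inequality itself is proved by rescaling: for `w = ⟪x, x⟫ + ε`, the vector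
`x <• w^{-1/2}` has norm at most `1`, and conjugating back by `w^{1/2}` gives
`⟪T x, T x⟫ ≤ ‖T‖² w`; then let `ε → 0`.
-/

section CStarAlgebra

variable {A : Type*} [CStarAlgebra A] [PartialOrder A] [StarOrderedRing A]

lemma le_smul_of_conjugate_rpow_neg_half_le {a b : A} (hb : IsStrictlyPositive b) {c : ℝ}
    (h : b ^ (-(1 / 2) : ℝ) * a * b ^ (-(1 / 2) : ℝ) ≤ algebraMap ℝ A c) : a ≤ c • b := by
  obtain ⟨hsqrt, hsqrt'⟩ : CFC.sqrt b * b ^ (-(1 / 2) : ℝ) = 1 ∧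
      b ^ (-(1 / 2) : ℝ) * CFC.sqrt b = 1 := by
    simp only [CFC.sqrt_eq_rpow, ← CFC.rpow_add hb.isUnit]
    norm_num
    exact CFC.rpow_zero b hb.nonneg
  calc a = CFC.sqrt b * (b ^ (-(1 / 2) : ℝ) * a * b ^ (-(1 / 2) : ℝ)) * CFC.sqrt b := by
        simp only [← mul_assoc, hsqrt, one_mul]
        rw [mul_assoc, hsqrt', mul_one]
    _ ≤ CFC.sqrt b * algebraMap ℝ A c * CFC.sqrt b :=
        conjugate_le_conjugate_of_nonneg h (CFC.sqrt_nonneg b)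
    _ = c • b := by
        rw [Algebra.algebraMap_eq_smul_one, mul_smul_comm, smul_mul_assoc, mul_one,
          CFC.sqrt_mul_sqrt_self b hb.nonneg]

end CStarAlgebra

namespace CStarModuleRight

section Inner

variable {A : Type*} [CStarAlgebra A] [PartialOrder A]
variable {E : Type*} [NormedAddCommGroup E] [NormedSpace ℂ E] [SMul Aᵐᵒᵖ E]
  [CStarModuleRight A E]

lemma inner_op_smul_left {a : A} {x y : E} : inner A (x <• a) y = star a * inner A x y := by
  rw [← star_inner y, inner_op_smul_right, star_mul, star_inner]

lemma inner_op_smul_op_smul {a : A} {x y : E} :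
    inner A (x <• a) (y <• a) = star a * inner A x y * a := by
  rw [inner_op_smul_left, inner_op_smul_right, mul_assoc]

variable (A) in
def innerₗ (x : E) : E →ₗ[ℂ] A where
  toFun y := inner A x y
  map_add' _ _ := inner_add_right
  map_smul' _ _ := inner_smul_right_complex

lemma inner_sub_right {x y z : E} : inner A x (y - z) = inner A x y - inner A x z :=
  map_sub (innerₗ A x) y z

lemma inner_sub_left {x y z : E} : inner A (x - y) z = inner A x z - inner A y z := by
  rw [← star_inner z, inner_sub_right, star_sub, star_inner, star_inner]

lemma inner_zero_left {y : E} : inner A (0 : E) y = 0 := by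
  rw [← star_inner y, ← star_zero A]
  exact congrArg star (map_zero (innerₗ A y))

lemma inner_smul_right_real {t : ℝ} {x y : E} : inner A x (t • y) = t • inner A x y := by
  rw [RCLike.real_smul_eq_coe_smul (K := ℂ) t y, inner_smul_right_complex,
    ← RCLike.real_smul_eq_coe_smul (K := ℂ) t]

lemma inner_smul_left_real {t : ℝ} {x y : E} : inner A (t • x) y = t • inner A x y := by
  rw [← star_inner y, inner_smul_right_real, star_smul, star_trivial, star_inner]

lemma sq_norm_eq_norm_inner_self (x : E) : ‖x‖ ^ 2 = ‖inner A x x‖ := by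
  rw [norm_eq_sqrt_norm_inner_self (A := A) x, Real.sq_sqrt (norm_nonneg _)]

variable [StarOrderedRing A]

/-- Cauchy–Schwarz, from the positivity of `⟪x <• a - t • y, x <• a - t • y⟫` for `a = ⟪x, y⟫`
and `t = ‖x‖²`. -/
lemma norm_inner_le (x y : E) : ‖inner A x y‖ ≤ ‖x‖ * ‖y‖ := by
  rcases eq_or_ne x 0 with rfl | hx
  · rw [inner_zero_left, norm_zero, norm_zero, zero_mul]
  set a : A := inner A x y with ha
  set t : ℝ := ‖x‖ ^ 2 with ht
  have htpos : 0 < t := by positivity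
  have hexpand : inner A (x <• a - t • y) (x <• a - t • y)
      = star a * inner A x x * a - t • (star a * a) - t • (star a * a)
        + t • (t • inner A y y) := by
    rw [inner_sub_left, inner_sub_right, inner_sub_right, inner_op_smul_left,
      inner_op_smul_left, inner_op_smul_right, inner_op_smul_right, inner_smul_left_real,
      inner_smul_left_real, inner_smul_right_real, inner_smul_right_real, ← ha, star_inner]
    simp only [mul_smul_comm, smul_mul_assoc, ← mul_assoc]
    abel
  have hconj : star a * inner A x x * a ≤ t • (star a * a) := by
    rw [ht, sq_norm_eq_norm_inner_self (A := A)]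
    exact CStarAlgebra.star_left_conjugate_le_norm_smul (star_inner x x)
  have hle : star a * a ≤ t • inner A y y := by
    have hpos : (0 : A) ≤ inner A (x <• a - t • y) (x <• a - t • y) := inner_self_nonneg
    rw [hexpand] at hpos
    refine (smul_le_smul_iff_of_pos_left htpos).mp (sub_nonneg.mp ?_)
    calc (0 : A) ≤ star a * inner A x x * a - t • (star a * a) - t • (star a * a)
          + t • (t • inner A y y) := hpos
      _ ≤ t • (star a * a) - t • (star a * a) - t • (star a * a)
          + t • (t • inner A y y) := by gcongr
      _ = t • (t • inner A y y) - t • (star a * a) := by abel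
  have hsq : ‖a‖ ^ 2 ≤ (‖x‖ * ‖y‖) ^ 2 :=
    calc ‖a‖ ^ 2 = ‖star a * a‖ := by rw [CStarRing.norm_star_mul_self, sq]
      _ ≤ ‖t • inner A y y‖ :=
          CStarAlgebra.norm_le_norm_of_nonneg_of_le (star_mul_self_nonneg a) hle
      _ = (‖x‖ * ‖y‖) ^ 2 := by
        rw [norm_smul, Real.norm_of_nonneg htpos.le, ← sq_norm_eq_norm_inner_self, ht, mul_pow]
  exact (pow_le_pow_iff_left₀ (norm_nonneg _) (by positivity) two_ne_zero).mp hsq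

variable (A) in
noncomputable def innerSL (x : E) : E →L[ℂ] A :=
  (innerₗ A x).mkContinuous ‖x‖ (norm_inner_le x)

lemma hasSum_inner_right {ι : Type*} {f : ι → E} {s : E} (hf : HasSum f s) (x : E) :
    HasSum (fun i => inner A x (f i)) (inner A x s) :=
  hf.mapL (innerSL A x)

end Inner

section Adjoint

variable {A : Type*} [CStarAlgebra A] [PartialOrder A]
variable {E F G : Type*} [NormedAddCommGroup E] [NormedSpace ℂ E] [SMul Aᵐᵒᵖ E]
  [CStarModuleRight A E] [NormedAddCommGroup F] [NormedSpace ℂ F] [SMul Aᵐᵒᵖ F]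
  [CStarModuleRight A F] [NormedAddCommGroup G] [NormedSpace ℂ G] [SMul Aᵐᵒᵖ G]
  [CStarModuleRight A G]

variable (A) in
def IsAdjointPair (T : E →L[ℂ] F) (Tadj : F →L[ℂ] E) : Prop :=
  ∀ x y, inner A (T x) y = inner A x (Tadj y)

lemma IsAdjointPair.comp {U : F →L[ℂ] G} {Uadj : G →L[ℂ] F} {T : E →L[ℂ] F}
    {Tadj : F →L[ℂ] E} (hU : IsAdjointPair A U Uadj) (hT : IsAdjointPair A T Tadj) :
    IsAdjointPair A (U.comp T) (Tadj.comp Uadj) :=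
  fun x y => (hU (T x) y).trans (hT x (Uadj y))

lemma IsAdjointPair.map_op_smul {T : E →L[ℂ] F} {Tadj : F →L[ℂ] E}
    (hT : IsAdjointPair A T Tadj) (x : E) (a : A) : T (x <• a) = T x <• a := by
  have hzero : inner A (T (x <• a) - T x <• a) (T (x <• a) - T x <• a) = 0 := by
    rw [inner_sub_left, hT, inner_op_smul_left, ← hT, inner_op_smul_left, sub_self]
  exact sub_eq_zero.mp (inner_self.mp hzero)

lemma IsAdjointPair.of_rightInverse {S R : E →L[ℂ] E} (hS : IsAdjointPair A S S)
    (hR : Function.RightInverse R S) : IsAdjointPair A R R := fun u v =>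
  calc inner A (R u) v = inner A (R u) (S (R v)) := by rw [hR v]
    _ = inner A (S (R u)) (R v) := (hS _ _).symm
    _ = inner A u (R v) := by rw [hR u]

variable [StarOrderedRing A]

lemma isAdjointPair_of_hasSum {ι : Type*} {V : ι → Type*} [∀ i, NormedAddCommGroup (V i)]
    [∀ i, NormedSpace ℂ (V i)] [∀ i, SMul Aᵐᵒᵖ (V i)] [∀ i, CStarModuleRight A (V i)]
    {Λ : ∀ i, E →L[ℂ] V i} {Λadj : ∀ i, V i →L[ℂ] E} (hΛ : ∀ i, IsAdjointPair A (Λ i) (Λadj i))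
    {S : E →L[ℂ] E} (hS : ∀ f, HasSum (fun i => Λadj i (Λ i f)) (S f)) :
    IsAdjointPair A S S := by
  have hinner (u v : E) : HasSum (fun i => inner A (Λ i u) (Λ i v)) (inner A u (S v)) := by
    convert hasSum_inner_right (A := A) (hS v) u using 2 with i
    exact hΛ i u (Λ i v)
  intro u v
  rw [← star_inner v]
  refine (hinner v u).star.unique ?_
  simpa only [star_inner] using hinner u v

lemma inner_map_self_le_smul_of_le {T : E →L[ℂ] F}
    (hT : ∀ (x : E) (a : A), T (x <• a) = T x <• a) {x : E} {w : A}
    (hw : IsStrictlyPositive w) (hxw : inner A x x ≤ w) :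
    inner A (T x) (T x) ≤ ‖T‖ ^ 2 • w := by
  set e : A := w ^ (-(1 / 2) : ℝ)
  have he : IsSelfAdjoint e := .of_nonneg CFC.rpow_nonneg
  have hnorm : ‖x <• e‖ ≤ 1 := by
    have hle : inner A (x <• e) (x <• e) ≤ 1 :=
      calc inner A (x <• e) (x <• e) = e * inner A x x * e := by
            rw [inner_op_smul_op_smul, he.star_eq]
        _ ≤ e * w * e := he.conjugate_le_conjugate hxw
        _ = 1 := CFC.conjugate_rpow_neg_one_half w
    rwa [← sq_le_one_iff₀ (norm_nonneg _), sq_norm_eq_norm_inner_self (A := A),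
      CStarAlgebra.norm_le_one_iff_of_nonneg _ inner_self_nonneg]
  have hconj : e * inner A (T x) (T x) * e = inner A (T (x <• e)) (T (x <• e)) := by
    rw [hT, inner_op_smul_op_smul, he.star_eq]
  refine le_smul_of_conjugate_rpow_neg_half_le hw ?_
  rw [← CStarAlgebra.norm_le_iff_le_algebraMap _ (sq_nonneg _)
    (he.conjugate_nonneg inner_self_nonneg), hconj, ← sq_norm_eq_norm_inner_self]
  gcongr
  simpa using T.le_opNorm_of_le hnorm

open Filter Topology in
lemma inner_map_self_le {T : E →L[ℂ] F} (hT : ∀ (x : E) (a : A), T (x <• a) = T x <• a)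
    (x : E) : inner A (T x) (T x) ≤ ‖T‖ ^ 2 • inner A x x := by
  have hε : ∀ ε > (0 : ℝ), inner A (T x) (T x) ≤ ‖T‖ ^ 2 • (inner A x x + algebraMap ℝ A ε) :=
    fun ε hε => inner_map_self_le_smul_of_le hT
      ((isStrictlyPositive_algebraMap hε).nonneg_add inner_self_nonneg)
      (le_add_of_nonneg_right (isStrictlyPositive_algebraMap hε).nonneg)
  have hlim : Tendsto (fun ε : ℝ => ‖T‖ ^ 2 • (inner A x x + algebraMap ℝ A ε)) (𝓝[>] 0)
      (𝓝 (‖T‖ ^ 2 • inner A x x)) := by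
    have hcont : Continuous fun ε : ℝ => ‖T‖ ^ 2 • (inner A x x + algebraMap ℝ A ε) := by
      fun_prop
    simpa using (hcont.tendsto 0).mono_left nhdsWithin_le_nhds
  exact ge_of_tendsto hlim (eventually_nhdsWithin_of_forall hε)

end Adjoint

end CStarModuleRight

open CStarModuleRight

lemma exists_bessel_bound_comp {A : Type*} [CStarAlgebra A] [PartialOrder A] [StarOrderedRing A]
    {E G : Type*} [NormedAddCommGroup E] [NormedSpace ℂ E] [SMul Aᵐᵒᵖ E] [CStarModuleRight A E]
    [NormedAddCommGroup G] [NormedSpace ℂ G] [SMul Aᵐᵒᵖ G] [CStarModuleRight A G]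
    {ι : Type*} {V : ι → Type*} [∀ i, NormedAddCommGroup (V i)] [∀ i, NormedSpace ℂ (V i)]
    [∀ i, SMul Aᵐᵒᵖ (V i)] [∀ i, CStarModuleRight A (V i)] {Λ : ∀ i, E →L[ℂ] V i}
    {b : A} (hb : b ≠ 0) (hup : ∀ x, ∑' i, inner A (Λ i x) (Λ i x) ≤ b * inner A x x * star b)
    {T : G →L[ℂ] E} (hT : ∀ (x : G) (a : A), T (x <• a) = T x <• a) :
    ∃ b' : A, b' ≠ 0 ∧
      ∀ f, ∑' i, inner A (Λ i (T f)) (Λ i (T f)) ≤ b' * inner A f f * star b' := by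
  set t : ℝ := ‖T‖ + 1
  have ht : 0 < t := by positivity
  refine ⟨t • b, smul_ne_zero ht.ne' hb, fun f => ?_⟩
  have hTf : inner A (T f) (T f) ≤ t ^ 2 • inner A f f :=
    (inner_map_self_le hT f).trans
      (smul_le_smul_of_nonneg_right (by gcongr; linarith) inner_self_nonneg)
  calc ∑' i, inner A (Λ i (T f)) (Λ i (T f)) ≤ b * inner A (T f) (T f) * star b := hup (T f)
    _ ≤ b * (t ^ 2 • inner A f f) * star b := star_right_conjugate_le_conjugate hTf b
    _ = t • b * inner A f f * star (t • b) := by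
        rw [star_smul, star_trivial t, sq]
        simp only [smul_mul_assoc, mul_smul_comm, smul_smul]

theorem dual_star_K_g_frame_of_frame_operator_general
    {𝓐 : Type*} [CStarAlgebra 𝓐] [PartialOrder 𝓐] [StarOrderedRing 𝓐]
    {I : Type*}
    {H : Type*} [NormedAddCommGroup H] [NormedSpace ℂ H] [SMul 𝓐ᵐᵒᵖ H]
    [CStarModuleRight 𝓐 H]
    {Hi : I → Type*} [∀ i, NormedAddCommGroup (Hi i)] [∀ i, NormedSpace ℂ (Hi i)]
    [∀ i, SMul 𝓐ᵐᵒᵖ (Hi i)] [∀ i, CStarModuleRight 𝓐 (Hi i)]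
    -- `K` is an adjointable operator on `H` with adjoint `Kadj`
    (K Kadj : H →L[ℂ] H)
    (hK : ∀ x y : H, (inner 𝓐 (K x) y : 𝓐) = inner 𝓐 x (Kadj y))
    -- the family `Λ i ∈ End*(H, Hi i)` of adjointable operators
    (Λ : ∀ i, H →L[ℂ] Hi i) (Λadj : ∀ i, Hi i →L[ℂ] H)
    (hΛ : ∀ i (x : H) (y : Hi i), (inner 𝓐 (Λ i x) y : 𝓐) = inner 𝓐 x (Λadj i y))
    -- `{Λ i}` is a `∗`-`K`-`g`-frame with bounds `a`, `b`
    (b : 𝓐) (hb : b ≠ 0)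
    (hsum : ∀ x : H, Summable fun i => (inner 𝓐 (Λ i x) (Λ i x) : 𝓐))
    (hup : ∀ x : H, ∑' i, (inner 𝓐 (Λ i x) (Λ i x) : 𝓐) ≤ b * (inner 𝓐 x x : 𝓐) * star b)
    -- the frame operator `S f = ∑ᵢ Λᵢ* Λᵢ f`, invertible in `End*(H)` with inverse `Sinv`
    (S Sinv : H →L[ℂ] H)
    (hS : ∀ f : H, HasSum (fun i => Λadj i (Λ i f)) (S f))
    (hS₁ : S.comp Sinv = ContinuousLinearMap.id ℂ H) :
    -- `{Λ i ∘ S⁻¹K}` is a `∗`-g-Bessel sequence …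
    ((∀ f : H, Summable fun i =>
        (inner 𝓐 (Λ i (Sinv (K f))) (Λ i (Sinv (K f))) : 𝓐)) ∧
      ∃ b' : 𝓐, b' ≠ 0 ∧ ∀ f : H,
        ∑' i, (inner 𝓐 (Λ i (Sinv (K f))) (Λ i (Sinv (K f))) : 𝓐) ≤
          b' * (inner 𝓐 f f : 𝓐) * star b') ∧
    -- … which is a dual `∗`-`K`-`g`-frame of `{Λ i}`:  `K f = ∑ᵢ Λᵢ*(Λᵢ S⁻¹ K f)`
    ∀ f : H, HasSum (fun i => Λadj i (Λ i (Sinv (K f)))) (K f) := by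
  have hSinv : Function.RightInverse Sinv S := fun v => congr($hS₁ v)
  have hT : IsAdjointPair 𝓐 (Sinv.comp K) (Kadj.comp Sinv) :=
    ((isAdjointPair_of_hasSum hΛ hS).of_rightInverse hSinv).comp hK
  refine ⟨⟨fun f => hsum _, exists_bessel_bound_comp hb hup hT.map_op_smul⟩, fun f => ?_⟩
  simpa only [hSinv (K f)] using hS (Sinv (K f))

/-- If `{Λ i}` is a `∗`-`K`-`g`-frame whose frame operator
`S f = ∑ᵢ Λᵢ* Λᵢ f` is invertible in `End*(H)`, then `{Λ i ∘ S⁻¹K}` is a dual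
`∗`-`K`-`g`-frame of `{Λ i}`; in particular `K f = ∑ᵢ Λᵢ*(Λᵢ S⁻¹ K f)` for all `f`. -/
theorem dual_star_K_g_frame_of_frame_operator
    {𝓐 : Type*} [CStarAlgebra 𝓐] [PartialOrder 𝓐] [StarOrderedRing 𝓐]
    {I : Type*} [Countable I]
    {H : Type*} [NormedAddCommGroup H] [NormedSpace ℂ H] [SMul 𝓐ᵐᵒᵖ H]
    [CStarModuleRight 𝓐 H] [CompleteSpace H]
    {Hi : I → Type*} [∀ i, NormedAddCommGroup (Hi i)] [∀ i, NormedSpace ℂ (Hi i)]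
    [∀ i, SMul 𝓐ᵐᵒᵖ (Hi i)] [∀ i, CStarModuleRight 𝓐 (Hi i)] [∀ i, CompleteSpace (Hi i)]
    -- `K` is an adjointable operator on `H` with adjoint `Kadj`
    (K Kadj : H →L[ℂ] H)
    (hK : ∀ x y : H, (inner 𝓐 (K x) y : 𝓐) = inner 𝓐 x (Kadj y))
    -- the family `Λ i ∈ End*(H, Hi i)` of adjointable operators
    (Λ : ∀ i, H →L[ℂ] Hi i) (Λadj : ∀ i, Hi i →L[ℂ] H)
    (hΛ : ∀ i (x : H) (y : Hi i), (inner 𝓐 (Λ i x) y : 𝓐) = inner 𝓐 x (Λadj i y))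
    -- `{Λ i}` is a `∗`-`K`-`g`-frame with bounds `a`, `b`
    (a b : 𝓐) (ha : a ≠ 0) (hb : b ≠ 0)
    (hsum : ∀ x : H, Summable fun i => (inner 𝓐 (Λ i x) (Λ i x) : 𝓐))
    (hlow : ∀ x : H,
      a * (inner 𝓐 (Kadj x) (Kadj x) : 𝓐) * star a ≤ ∑' i, (inner 𝓐 (Λ i x) (Λ i x) : 𝓐))
    (hup : ∀ x : H, ∑' i, (inner 𝓐 (Λ i x) (Λ i x) : 𝓐) ≤ b * (inner 𝓐 x x : 𝓐) * star b)
    -- the frame operator `S f = ∑ᵢ Λᵢ* Λᵢ f`, invertible in `End*(H)` with inverse `Sinv`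
    (S Sinv : H →L[ℂ] H)
    (hS : ∀ f : H, HasSum (fun i => Λadj i (Λ i f)) (S f))
    (hS₁ : S.comp Sinv = ContinuousLinearMap.id ℂ H)
    (hS₂ : Sinv.comp S = ContinuousLinearMap.id ℂ H) :
    -- `{Λ i ∘ S⁻¹K}` is a `∗`-g-Bessel sequence …
    ((∀ f : H, Summable fun i =>
        (inner 𝓐 (Λ i (Sinv (K f))) (Λ i (Sinv (K f))) : 𝓐)) ∧
      ∃ b' : 𝓐, b' ≠ 0 ∧ ∀ f : H,
        ∑' i, (inner 𝓐 (Λ i (Sinv (K f))) (Λ i (Sinv (K f))) : 𝓐) ≤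
          b' * (inner 𝓐 f f : 𝓐) * star b') ∧
    -- … which is a dual `∗`-`K`-`g`-frame of `{Λ i}`:  `K f = ∑ᵢ Λᵢ*(Λᵢ S⁻¹ K f)`
    ∀ f : H, HasSum (fun i => Λadj i (Λ i (Sinv (K f)))) (K f) :=
  dual_star_K_g_frame_of_frame_operator_general K Kadj hK Λ Λadj hΛ b hb hsum hup S Sinv hS hS₁
end
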